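/- Let a and b be positive real numbers and let n be a positive integer. Then Σ over positive integers d of d^{−(a+b+2)} · Σ over pairs (e₁, e₂) with 1 ≤ e₁, e₂ ≤ d and e₁e₂ ≡ n (mod d) of ζ(a+1, e₂/d) converges absolutely and equals [ζ(a+1)·ζ(b+1)/ζ(a+b+2)] · σ_{a+b+1}(n) / n^{a+b+1}. -/

import Mathlib

open Finset

/-- `σ_c(n) = ∑_{d ∣ n} d^c` for real `c`. -/
noncomputable def sigmaR (c : ℝ) (n : ℕ) : ℝ := ∑ d ∈ n.divisors, (d : ℝ) ^ c

/-- The Hurwitz zeta function `ζ(s, x)` for `x ∈ (0, 1]` (analytic continuation of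
`∑_{n ≥ 0} (n + x)^{-s}`); note that `ζ(s, 1) = ζ(s)`. -/
noncomputable def hzeta (s : ℂ) (x : ℝ) : ℂ := HurwitzZeta.hurwitzZeta (x : UnitAddCircle) s

/-! For fixed `m`, the congruence `e * m ≡ n (mod d)` has `gcd(m, d)` solutions `e ∈ [1, d]` when
`gcd(m, d) ∣ n` and none otherwise, and `ζ(s, e/d) = d^s ∑_{k ≥ 0} (d k + e)^{-s}`. Hence the
`d`-th term is `∑_{m ≥ 1} d^{-(b+1)} m^{-(a+1)} w(gcd(d, m))` with `w(g) = g` if `g ∣ n` and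
`w(g) = 0` otherwise. Writing `(d, m) = (g x, g y)` with `x, y` coprime splits this double series
into `∑_g g^{-(a+b+2)} w(g) = σ_{a+b+1}(n) / n^{a+b+1}` times `∑_{x ⊥ y} x^{-(b+1)} y^{-(a+1)}`,
and the same splitting with `w = 1` shows that the coprime sum is `ζ(a+1) ζ(b+1) / ζ(a+b+2)`. -/

theorem card_filter_Icc_modEq {q : ℕ} (hq : 0 < q) (g v : ℕ) :
    #{e ∈ Icc 1 (g * q) | e ≡ v [MOD q]} = g := by
  have hq' : (q : ℚ) ≠ 0 := by positivity
  have hshift : ((g * q : ℕ) - v : ℚ) / q = ((0 : ℕ) - v : ℚ) / q + (g : ℤ) := by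
    push_cast; field_simp; ring
  rw [← Nat.cast_inj (R := ℤ), ← zero_add 1, Icc_add_one_left_eq_Ioc,
    Nat.Ioc_filter_modEq_card _ _ hq, hshift, Int.floor_add_intCast]
  simp

theorem Nat.Coprime.exists_mul_modEq_iff {m q : ℕ} (h : m.Coprime q) (n : ℕ) :
    ∃ c, ∀ e, e * m ≡ n [MOD q] ↔ e ≡ c [MOD q] := by
  rcases Nat.eq_zero_or_pos q with rfl | hq
  · exact ⟨n, by simp [(Nat.coprime_zero_right m).mp h]⟩
  have : NeZero q := ⟨hq.ne'⟩
  let u := ZMod.unitOfCoprime m h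
  refine ⟨((n : ZMod q) * ↑u⁻¹).val, fun e => ?_⟩
  rw [← ZMod.natCast_eq_natCast_iff, ← ZMod.natCast_eq_natCast_iff, ZMod.natCast_zmod_val,
    Nat.cast_mul, Units.eq_mul_inv_iff_mul_eq, ZMod.coe_unitOfCoprime]

theorem card_filter_Icc_mul_modEq {d : ℕ} (hd : 0 < d) (m n : ℕ) :
    #{e ∈ Icc 1 d | e * m ≡ n [MOD d]} = if m.gcd d ∣ n then m.gcd d else 0 := by
  obtain ⟨m', q, hcop, hm, hdq⟩ := Nat.exists_coprime m d
  set g := m.gcd d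
  have hg : 0 < g := Nat.gcd_pos_of_pos_right m hd
  split_ifs with hn
  · obtain ⟨n', rfl⟩ := hn
    obtain ⟨c, hc⟩ := hcop.exists_mul_modEq_iff n'
    have hiff (e : ℕ) : e * m ≡ g * n' [MOD d] ↔ e ≡ c [MOD q] := by
      rw [← hc, hm, hdq, ← mul_assoc, mul_comm g n', Nat.ModEq.mul_right_cancel_iff' hg.ne']
    simp_rw [hiff, hdq, mul_comm q g]
    exact card_filter_Icc_modEq (Nat.pos_of_mul_pos_right (hdq ▸ hd)) g c
  · rw [card_eq_zero, filter_eq_empty_iff]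
    intro e _ he
    refine hn (Nat.dvd_trans ?_ (Nat.gcd_dvd_left n d))
    rw [← he.gcd_eq]
    exact Nat.dvd_gcd (Dvd.dvd.mul_left (Nat.gcd_dvd_left m _) e) (Nat.gcd_dvd_right m _)

theorem sum_filter_mul_modEq_snd {M : Type*} [AddCommMonoid M] {d : ℕ} (hd : 0 < d) (n : ℕ)
    (f : ℕ → M) :
    ∑ e ∈ Icc 1 d ×ˢ Icc 1 d with e.1 * e.2 ≡ n [MOD d], f e.2 =
      ∑ m ∈ Icc 1 d, (if m.gcd d ∣ n then m.gcd d else 0) • f m := by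
  rw [sum_filter, sum_product_right]
  refine sum_congr rfl fun m _ => ?_
  rw [← card_filter_Icc_mul_modEq hd, ← sum_filter]
  exact sum_const (f m)

theorem tsum_succ_eq_sum_Icc_tsum {R : Type*} [AddCommGroup R] [UniformSpace R]
    [IsUniformAddGroup R] [CompleteSpace R] [T0Space R] {f : ℕ → R} (hf : Summable f)
    {d : ℕ} (hd : 0 < d) :
    ∑' m, f (m + 1) = ∑ e ∈ Icc 1 d, ∑' k, f (d * k + e) := by
  obtain ⟨d, rfl⟩ := Nat.exists_eq_add_one_of_ne_zero hd.ne'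
  rw [Nat.sumByResidueClasses ((summable_nat_add_iff 1).mpr hf) (d + 1),
    ← Ico_add_one_right_eq_Icc, sum_Ico_eq_sum_range, add_tsub_cancel_right,
    ← Fin.sum_univ_eq_sum_range]
  -- `ZMod (d + 1)` is `Fin (d + 1)` by definition
  exact sum_congr rfl fun j _ => tsum_congr fun k => congrArg f (by simp only [ZMod.val]; ring)

open HurwitzZeta in
theorem hurwitzZeta_ofReal_eq_tsum_rpow {x : ℝ} (hx : x ∈ Set.Icc 0 1) {s : ℝ} (hs : 1 < s) :
    hurwitzZeta x s = ↑(∑' k : ℕ, ((k : ℝ) + x) ^ (-s)) := by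
  rw [Complex.ofReal_tsum]
  refine ((hasSum_hurwitzZeta_of_one_lt_re hx (by simpa using hs)).congr_fun
    fun k => ?_).tsum_eq.symm
  have hk : 0 ≤ (k : ℝ) + x := by linarith [hx.1, (Nat.cast_nonneg k : (0 : ℝ) ≤ k)]
  rw [Real.rpow_neg hk, Complex.ofReal_inv, Complex.ofReal_cpow hk]
  push_cast
  rw [one_div]

theorem riemannZeta_ofReal_eq_tsum_rpow {s : ℝ} (hs : 1 < s) :
    riemannZeta s = ↑(∑' m : ℕ, (m : ℝ) ^ (-s)) := by
  simpa [HurwitzZeta.hurwitzZeta_zero] using hurwitzZeta_ofReal_eq_tsum_rpow (x := 0) (by simp) hs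

theorem hzeta_natCast_div_eq_tsum {s : ℝ} (hs : 1 < s) {d e : ℕ} (hd : 0 < d) (he : e ≤ d) :
    hzeta s (e / d) = ↑((d : ℝ) ^ s * ∑' k : ℕ, ((d * k + e : ℕ) : ℝ) ^ (-s)) := by
  have hd' : (0 : ℝ) < d := Nat.cast_pos.mpr hd
  have hx : (e / d : ℝ) ∈ Set.Icc 0 1 :=
    ⟨by positivity, div_le_one_of_le₀ (Nat.cast_le.mpr he) hd'.le⟩
  rw [hzeta, hurwitzZeta_ofReal_eq_tsum_rpow hx hs, ← tsum_mul_left]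
  congr 2 with k
  rw [show (k : ℝ) + e / d = (d * k + e : ℕ) / d by push_cast; field_simp,
    Real.div_rpow (by positivity) hd'.le, Real.rpow_neg hd'.le, Real.rpow_neg (by positivity)]
  field_simp

theorem rpow_mul_sum_hzeta_eq_tsum {s t : ℝ} (hs : 1 < s) (ht : t ≠ 0) (n d : ℕ) :
    (((d : ℝ) ^ (-(s + t)) : ℝ) : ℂ) *
        ∑ e ∈ Icc 1 d ×ˢ Icc 1 d with e.1 * e.2 ≡ n [MOD d], hzeta s (e.2 / d) =
      ↑(∑' m : ℕ, (d : ℝ) ^ (-t) * (m : ℝ) ^ (-s) *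
        if d.gcd m ∣ n then (d.gcd m : ℝ) else 0) := by
  rcases Nat.eq_zero_or_pos d with rfl | hd
  · simp [Real.zero_rpow (neg_ne_zero.mpr ht)]
  have hd' : (0 : ℝ) < d := Nat.cast_pos.mpr hd
  set u : ℕ → ℝ := fun m => (m : ℝ) ^ (-s) * if m.gcd d ∣ n then (m.gcd d : ℝ) else 0
  have hu : Summable u := by
    refine .of_nonneg_of_le (fun m => by positivity) (fun m => ?_)
      ((Real.summable_nat_rpow.mpr (by linarith : -s < -1)).mul_right (d : ℝ))
    refine mul_le_mul_of_nonneg_left ?_ (by positivity)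
    split_ifs
    · exact_mod_cast Nat.gcd_le_right m hd
    · positivity
  have hu0 : u 0 = 0 := by simp [u, Real.zero_rpow (by linarith : -s ≠ 0)]
  have hclass : ∀ m ∈ Icc 1 d, (if m.gcd d ∣ n then m.gcd d else 0) • hzeta s (m / d) =
      ↑((d : ℝ) ^ s * ∑' k, u (d * k + m)) := fun m hm => by
    rw [hzeta_natCast_div_eq_tsum hs hd (mem_Icc.mp hm).2]
    simp only [u, Nat.gcd_mul_left_add_left, tsum_mul_right]
    split_ifs <;> push_cast <;> ring
  calc
    _ = ↑((d : ℝ) ^ (-(s + t)) * ((d : ℝ) ^ s * ∑ m ∈ Icc 1 d, ∑' k, u (d * k + m))) := by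
      rw [sum_filter_mul_modEq_snd hd n (fun m : ℕ => hzeta s (m / d)), sum_congr rfl hclass,
        ← Complex.ofReal_sum, ← mul_sum, ← Complex.ofReal_mul]
    _ = ↑((d : ℝ) ^ (-t) * ∑' m, u m) := by
      rw [← tsum_succ_eq_sum_Icc_tsum hu hd, hu.tsum_eq_zero_add, hu0, zero_add, ← mul_assoc,
        ← Real.rpow_add hd', show -(s + t) + s = -t by ring]
    _ = _ := by
      rw [← tsum_mul_left]
      simp only [u, Nat.gcd_comm d, mul_assoc]

theorem tsum_eq_tsum_coprime_mul {M : Type*} [AddCommMonoid M] [TopologicalSpace M]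
    {f : ℕ × ℕ → M} (hf : f (0, 0) = 0) :
    ∑' p, f p = ∑' q : ℕ × ℕ × ℕ,
      if q.2.1.Coprime q.2.2 then f (q.1 * q.2.1, q.1 * q.2.2) else 0 := by
  have gcd_eq {g x y : ℕ} (h : x.Coprime y) : (g * x).gcd (g * y) = g := by
    rw [Nat.gcd_mul_left, h, mul_one]
  refine tsum_eq_tsum_of_ne_zero_bij (fun q => (q.1.1 * q.1.2.1, q.1.1 * q.1.2.2)) ?_ ?_ ?_
  · rintro ⟨⟨g, x, y⟩, hq⟩ ⟨⟨g', x', y'⟩, hq'⟩ h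
    simp only [Function.mem_support, ne_eq, ite_eq_right_iff, Classical.not_imp] at hq hq'
    simp only [Prod.mk.injEq] at h
    obtain rfl : g = g' := by rw [← gcd_eq (g := g) hq.1, ← gcd_eq (g := g') hq'.1, h.1, h.2]
    have hg : 0 < g := Nat.pos_of_ne_zero fun h0 => hq.2 (by simpa [h0] using hf)
    simp [Nat.eq_of_mul_eq_mul_left hg h.1, Nat.eq_of_mul_eq_mul_left hg h.2]
  · rintro ⟨d, m⟩ hdm
    have hg : 0 < d.gcd m := Nat.pos_of_ne_zero fun h0 => hdm <| by
      rw [Nat.gcd_eq_zero_iff] at h0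
      rwa [h0.1, h0.2]
    have hd := Nat.mul_div_cancel' (Nat.gcd_dvd_left d m)
    have hm := Nat.mul_div_cancel' (Nat.gcd_dvd_right d m)
    refine ⟨⟨(d.gcd m, d / d.gcd m, m / d.gcd m), ?_⟩, by simp [hd, hm]⟩
    simp only [Function.mem_support, ne_eq, ite_eq_right_iff, Classical.not_imp]
    exact ⟨Nat.coprime_div_gcd_div_gcd hg, by rwa [hd, hm]⟩
  · rintro ⟨q, hq⟩
    simp only [Function.mem_support, ne_eq, ite_eq_right_iff, Classical.not_imp] at hq
    simp [hq.1]

theorem summable_rpow_mul_rpow {α β : ℝ} (hα : 1 < α) (hβ : 1 < β) :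
    Summable fun p : ℕ × ℕ => (p.1 : ℝ) ^ (-α) * (p.2 : ℝ) ^ (-β) :=
  (Real.summable_nat_rpow.mpr (by linarith)).mul_of_nonneg
    (Real.summable_nat_rpow.mpr (by linarith)) (fun _ => by positivity) (fun _ => by positivity)

theorem tsum_rpow_mul_rpow_mul_gcd {α β : ℝ} (hα : 1 < α) (hβ : 1 < β) {v : ℕ → ℝ}
    (hv : Summable fun g : ℕ => ‖(g : ℝ) ^ (-(α + β)) * v g‖) :
    ∑' p : ℕ × ℕ, (p.1 : ℝ) ^ (-α) * (p.2 : ℝ) ^ (-β) * v (p.1.gcd p.2) =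
      (∑' g : ℕ, (g : ℝ) ^ (-(α + β)) * v g) *
        ∑' r : ℕ × ℕ, if r.1.Coprime r.2 then (r.1 : ℝ) ^ (-α) * (r.2 : ℝ) ^ (-β) else 0 := by
  have hcop : Summable fun r : ℕ × ℕ =>
      ‖if r.1.Coprime r.2 then (r.1 : ℝ) ^ (-α) * (r.2 : ℝ) ^ (-β) else 0‖ := by
    refine (summable_rpow_mul_rpow hα hβ).of_nonneg_of_le (fun _ => norm_nonneg _) fun r => ?_
    split_ifs
    · exact (Real.norm_of_nonneg (by positivity)).le
    · rw [norm_zero]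
      positivity
  rw [tsum_eq_tsum_coprime_mul (by simp [Real.zero_rpow (by linarith : -α ≠ 0)]),
    tsum_mul_tsum_of_summable_norm hv hcop]
  refine tsum_congr fun ⟨g, x, y⟩ => ?_
  dsimp only
  split_ifs with h
  · rw [Nat.gcd_mul_left, h, mul_one, Nat.cast_mul, Nat.cast_mul,
      Real.mul_rpow (by positivity) (by positivity), Real.mul_rpow (by positivity) (by positivity),
      neg_add, Real.rpow_add' (by positivity) (by linarith)]
    ring
  · rw [mul_zero]

theorem tsum_coprime_rpow_mul_rpow {α β : ℝ} (hα : 1 < α) (hβ : 1 < β) :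
    ∑' r : ℕ × ℕ, (if r.1.Coprime r.2 then (r.1 : ℝ) ^ (-α) * (r.2 : ℝ) ^ (-β) else 0) =
      (∑' m : ℕ, (m : ℝ) ^ (-α)) * (∑' m : ℕ, (m : ℝ) ^ (-β)) /
        ∑' m : ℕ, (m : ℝ) ^ (-(α + β)) := by
  have hsum {c : ℝ} (hc : 1 < c) : Summable fun m : ℕ => ‖(m : ℝ) ^ (-c)‖ :=
    (Real.summable_nat_rpow.mpr (by linarith : -c < -1)).norm
  have hζ : 0 < ∑' m : ℕ, (m : ℝ) ^ (-(α + β)) :=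
    (hsum (by linarith)).of_norm.tsum_pos (fun _ => by positivity) 1 (by simp)
  have h := tsum_rpow_mul_rpow_mul_gcd hα hβ (v := fun _ => 1)
    (by simpa only [mul_one] using hsum (by linarith))
  simp only [mul_one] at h
  rw [← tsum_mul_tsum_of_summable_norm (hsum hα) (hsum hβ)] at h
  rw [h, mul_div_cancel_left₀ _ hζ.ne']

theorem tsum_rpow_mul_ite_dvd_eq_sigmaR_div {n : ℕ} (hn : 0 < n) (c : ℝ) :
    ∑' g : ℕ, (g : ℝ) ^ (-(c + 1)) * (if g ∣ n then (g : ℝ) else 0) =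
      sigmaR c n / (n : ℝ) ^ c := by
  rw [sigmaR, ← Nat.sum_div_divisors, sum_div,
    tsum_eq_sum (s := n.divisors) fun g hg => by
      rw [if_neg fun h => hg (Nat.mem_divisors.mpr ⟨h, hn.ne'⟩), mul_zero]]
  refine sum_congr rfl fun g hg => ?_
  obtain ⟨hdvd, -⟩ := Nat.mem_divisors.mp hg
  have hg0 : (0 : ℝ) < g := Nat.cast_pos.mpr (Nat.pos_of_mem_divisors hg)
  rw [if_pos hdvd, Nat.cast_div hdvd hg0.ne', Real.div_rpow (by positivity) hg0.le,
    Real.rpow_neg hg0.le, Real.rpow_add_one hg0.ne']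
  field_simp

theorem hasSum_rpow_mul_rpow_mul_ite_gcd_dvd {α β : ℝ} (hα : 1 < α) (hβ : 1 < β) {n : ℕ}
    (hn : 0 < n) :
    HasSum (fun p : ℕ × ℕ => (p.1 : ℝ) ^ (-α) * (p.2 : ℝ) ^ (-β) *
        if p.1.gcd p.2 ∣ n then (p.1.gcd p.2 : ℝ) else 0)
      ((∑' m : ℕ, (m : ℝ) ^ (-α)) * (∑' m : ℕ, (m : ℝ) ^ (-β)) /
          (∑' m : ℕ, (m : ℝ) ^ (-(α + β))) *
        (sigmaR (α + β - 1) n / (n : ℝ) ^ (α + β - 1))) := by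
  have hw (g : ℕ) :
      0 ≤ (if g ∣ n then (g : ℝ) else 0) ∧ (if g ∣ n then (g : ℝ) else 0) ≤ n := by
    by_cases h : g ∣ n <;> simp [h, Nat.le_of_dvd hn]
  have hv : Summable fun g : ℕ => ‖(g : ℝ) ^ (-(α + β)) * if g ∣ n then (g : ℝ) else 0‖ :=
    ((Real.summable_nat_rpow.mpr (by linarith : -(α + β) < -1)).mul_right (n : ℝ))
      |>.of_nonneg_of_le (fun _ => norm_nonneg _) fun g => by
        rw [Real.norm_of_nonneg (mul_nonneg (by positivity) (hw g).1)]
        exact mul_le_mul_of_nonneg_left (hw g).2 (by positivity)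
  have hsum : Summable fun p : ℕ × ℕ => (p.1 : ℝ) ^ (-α) * (p.2 : ℝ) ^ (-β) *
      if p.1.gcd p.2 ∣ n then (p.1.gcd p.2 : ℝ) else 0 :=
    ((summable_rpow_mul_rpow hα hβ).mul_right (n : ℝ)).of_nonneg_of_le
      (fun p => mul_nonneg (by positivity) (hw _).1)
      (fun p => mul_le_mul_of_nonneg_left (hw _).2 (by positivity))
  convert hsum.hasSum using 1
  rw [tsum_rpow_mul_rpow_mul_gcd hα hβ hv, tsum_coprime_rpow_mul_rpow hα hβ,
    ← tsum_rpow_mul_ite_dvd_eq_sigmaR_div hn, sub_add_cancel, mul_comm]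

theorem stmt8 (a b : ℝ) (ha : 0 < a) (hb : 0 < b) (n : ℕ) (hn : 0 < n) :
    Summable (fun d : ℕ =>
      ‖((d : ℝ) ^ (-(a + b + 2)) : ℝ) *
          ∑ e ∈ (Finset.Icc 1 d ×ˢ Finset.Icc 1 d).filter
              (fun e : ℕ × ℕ => e.1 * e.2 ≡ n [MOD d]),
            hzeta ((a : ℂ) + 1) ((e.2 : ℝ) / d)‖) ∧
    (∑' d : ℕ,
        ((d : ℝ) ^ (-(a + b + 2)) : ℝ) *
          ∑ e ∈ (Finset.Icc 1 d ×ˢ Finset.Icc 1 d).filter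
              (fun e : ℕ × ℕ => e.1 * e.2 ≡ n [MOD d]),
            hzeta ((a : ℂ) + 1) ((e.2 : ℝ) / d))
      = riemannZeta ((a : ℂ) + 1) * riemannZeta ((b : ℂ) + 1) / riemannZeta ((a : ℂ) + b + 2)
          * (sigmaR (a + b + 1) n : ℂ) / ((n : ℝ) ^ (a + b + 1) : ℝ) := by
  have hs : 1 < a + 1 := by linarith
  have ht : 1 < b + 1 := by linarith
  have H := hasSum_rpow_mul_rpow_mul_ite_gcd_dvd ht hs hn
  rw [show b + 1 + (a + 1) = a + b + 2 by ring, show a + b + 2 - 1 = a + b + 1 by ring] at H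
  have hterm (d : ℕ) : (((d : ℝ) ^ (-(a + b + 2)) : ℝ) : ℂ) *
      ∑ e ∈ (Icc 1 d ×ˢ Icc 1 d).filter (fun e : ℕ × ℕ => e.1 * e.2 ≡ n [MOD d]),
        hzeta ((a : ℂ) + 1) ((e.2 : ℝ) / d) =
      ↑(∑' m : ℕ, (d : ℝ) ^ (-(b + 1)) * (m : ℝ) ^ (-(a + 1)) *
        if d.gcd m ∣ n then (d.gcd m : ℝ) else 0) := by
    convert rpow_mul_sum_hzeta_eq_tsum hs (t := b + 1) (by linarith) n d using 4 <;>
      push_cast <;> ring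
  have hF := H.prod_fiberwise fun d => (H.summable.prod_factor d).hasSum
  refine ⟨hF.summable.norm.congr fun d => by rw [hterm, Complex.norm_real], ?_⟩
  rw [tsum_congr hterm, ← Complex.ofReal_tsum, hF.tsum_eq,
    show (a : ℂ) + 1 = ↑(a + 1) by push_cast; ring, show (b : ℂ) + 1 = ↑(b + 1) by push_cast; ring,
    show (a : ℂ) + b + 2 = ↑(a + b + 2) by push_cast; ring, riemannZeta_ofReal_eq_tsum_rpow hs,
    riemannZeta_ofReal_eq_tsum_rpow ht, riemannZeta_ofReal_eq_tsum_rpow (by linarith)]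
  push_cast
  ring
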